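/- Let α : M_n(ℂ) → B(H) and β : M_n(ℂ)^op → B(K) be unital *-homomorphisms, let q = (1/n) Σ_{ij} α(E_{ij}) ⊗ β(E_{ji}) ∈ B(H ⊗ K), and for ξ ∈ H let R_ξ : H_ε → H be defined by R_ξ(x) = α(x)ξ, where H_ε is M_n(ℂ) with inner product n Tr(x*y). Then for all ξ, η ∈ H: q (R_ξ R_η* ⊗ 1_K) = (R_ξ R_η* ⊗ 1_K) q = q (θ_{ξ,η} ⊗ 1_K) q, where θ_{ξ,η} ∈ B(H) is the rank-one operator ζ ↦ ⟨η, ζ⟩ ξ. -/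

import Mathlib

/-!
Put `a i j = α(E_ij) ⊗ 1` and `c i j = 1 ⊗ β(E_ji)`: two mutually commuting systems of matrix
units, with `n q = ∑ a i j * c i j`. Multiplying `n q` by a matrix unit `a i j` on either side
is the same as multiplying it by `c j i`. The trace form of the inner product of `H_ε` gives
`n R_ξ R_η* = ∑ α(E_ij) θ_{ξ,η} α(E_ji)`. In `q (∑ a i j θ a j i)` trade the left factor
`a i j` for `c j i`, in `(∑ a i j θ a j i) q` the right factor `a j i` for `c i j`; since
`θ ⊗ 1` commutes with every `c k l`, both sums collapse to `q (θ ⊗ 1) q`.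
-/

open Matrix MulOpposite

section MatrixUnits

variable {ι R A : Type*} [Fintype ι] [DecidableEq ι]

def IsMatrixUnits [Mul A] [Zero A] (a : ι → ι → A) : Prop :=
  ∀ i j k l, a i j * a k l = if j = k then a i l else 0

lemma Matrix.single_one_mul_single_one [Semiring R] (i j k l : ι) :
    single i j (1 : R) * single k l 1 = if j = k then single i l 1 else 0 := by
  split_ifs with h
  · subst h
    simp
  · exact single_mul_single_of_ne (c := 1) i j k h 1

lemma isMatrixUnits_map_single [Semiring R] [Semiring A] {F : Type*}
    [FunLike F (Matrix ι ι R) A] [RingHomClass F (Matrix ι ι R) A] (φ : F) :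
    IsMatrixUnits fun i j => φ (single i j (1 : R)) := by
  intro i j k l
  rw [← map_mul, single_one_mul_single_one, apply_ite φ, map_zero]

lemma isMatrixUnits_map_op_single [Semiring R] [Semiring A] {F : Type*}
    [FunLike F (Matrix ι ι R)ᵐᵒᵖ A] [RingHomClass F (Matrix ι ι R)ᵐᵒᵖ A] (ψ : F) :
    IsMatrixUnits fun i j => ψ (op (single j i (1 : R))) := by
  intro i j k l
  rw [← map_mul, ← op_mul, single_one_mul_single_one]
  rcases eq_or_ne j k with rfl | h
  · simp
  · simp [h, Ne.symm h]

def matrixUnitPairing [Semiring A] (a c : ι → ι → A) : A :=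
  ∑ i, ∑ j, a i j * c i j

section CommutingMatrixUnits

variable [Ring A] {a c : ι → ι → A} (ha : IsMatrixUnits a) (hc : IsMatrixUnits c)
  (hac : ∀ i j k l, Commute (a i j) (c k l))
include ha hc hac

lemma matrixUnitPairing_mul_eq (i j : ι) :
    matrixUnitPairing a c * a i j = matrixUnitPairing a c * c j i := by
  have hleft : matrixUnitPairing a c * a i j = ∑ k, a k j * c k i := by
    have hterm : ∀ k l, a k l * c k l * a i j = (if l = i then a k j else 0) * c k l := by
      intro k l
      rw [mul_assoc, ← (hac i j k l).eq, ← mul_assoc, ha]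
    simp [matrixUnitPairing, Finset.sum_mul, hterm]
  have hright : matrixUnitPairing a c * c j i = ∑ k, a k j * c k i := by
    simp only [matrixUnitPairing, Finset.sum_mul, mul_assoc, hc _ _ _ _]
    simp
  rw [hleft, hright]

lemma mul_matrixUnitPairing_eq (i j : ι) :
    a i j * matrixUnitPairing a c = c j i * matrixUnitPairing a c := by
  have hleft : a i j * matrixUnitPairing a c = ∑ l, a i l * c j l := by
    simp [matrixUnitPairing, Finset.mul_sum, ← mul_assoc, ha _ _ _ _]
  have hright : c j i * matrixUnitPairing a c = ∑ l, a i l * c j l := by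
    have hterm : ∀ k l, c j i * (a k l * c k l) = a k l * (if i = k then c j l else 0) := by
      intro k l
      rw [← mul_assoc, ← (hac k l j i).eq, mul_assoc, hc]
    simp [matrixUnitPairing, Finset.mul_sum, hterm]
  rw [hleft, hright]

variable {t : A} (htc : ∀ i j, Commute t (c i j))
include htc

lemma matrixUnitPairing_mul_sum_conj :
    matrixUnitPairing a c * (∑ i, ∑ j, a i j * t * a j i)
      = matrixUnitPairing a c * t * matrixUnitPairing a c := by
  set Q := matrixUnitPairing a c
  calc Q * (∑ i, ∑ j, a i j * t * a j i) = ∑ i, ∑ j, Q * a i j * t * a j i := by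
        simp only [Finset.mul_sum, mul_assoc]
    _ = ∑ i, ∑ j, Q * t * (a j i * c j i) := by
        refine Finset.sum_congr rfl fun i _ => Finset.sum_congr rfl fun j _ => ?_
        rw [matrixUnitPairing_mul_eq ha hc hac, mul_assoc Q, ← (htc j i).eq, (hac j i j i).eq]
        simp only [mul_assoc]
    _ = Q * t * Q := by
        rw [Finset.sum_comm]
        simp only [Q, matrixUnitPairing, Finset.mul_sum]

lemma sum_conj_mul_matrixUnitPairing :
    (∑ i, ∑ j, a i j * t * a j i) * matrixUnitPairing a c
      = matrixUnitPairing a c * t * matrixUnitPairing a c := by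
  set Q := matrixUnitPairing a c
  calc (∑ i, ∑ j, a i j * t * a j i) * Q = ∑ i, ∑ j, a i j * t * (a j i * Q) := by
        simp only [Finset.sum_mul, mul_assoc]
    _ = ∑ i, ∑ j, a i j * c i j * t * Q := by
        refine Finset.sum_congr rfl fun i _ => Finset.sum_congr rfl fun j _ => ?_
        rw [mul_matrixUnitPairing_eq ha hc hac, ← mul_assoc, mul_assoc _ t, (htc i j).eq]
        simp only [Q, mul_assoc]
    _ = Q * t * Q := by
        simp only [Q, matrixUnitPairing, Finset.sum_mul]

end CommutingMatrixUnits

lemma inner_map_single_one {E : Type*} [Inner ℂ E] {Λ : Matrix ι ι ℂ → E} {s : ℂ}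
    (hΛ : ∀ x y, inner ℂ (Λ x) (Λ y) = s * (xᴴ * y).trace) (i j : ι) (x : Matrix ι ι ℂ) :
    inner ℂ (Λ (single i j 1)) (Λ x) = s * x i j := by
  rw [hΛ, conjTranspose_single, star_one, trace_single_mul, one_smul]

section RankOne

variable {H Hε : Type*} [NormedAddCommGroup H] [InnerProductSpace ℂ H] [CompleteSpace H]
  [NormedAddCommGroup Hε] [InnerProductSpace ℂ Hε] [CompleteSpace Hε]

lemma adjoint_map_single_one (α : Matrix ι ι ℂ →⋆ₐ[ℂ] (H →L[ℂ] H)) (i j : ι) :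
    ContinuousLinearMap.adjoint (α (single i j 1)) = α (single j i 1) := by
  rw [← ContinuousLinearMap.star_eq_adjoint, ← map_star, star_eq_conjTranspose,
    conjTranspose_single, star_one]

theorem comp_adjoint_eq_sum_conj_rankOne (α : Matrix ι ι ℂ →⋆ₐ[ℂ] (H →L[ℂ] H))
    {Λ : Matrix ι ι ℂ →ₗ[ℂ] Hε} {s : ℂ} (hs : s ≠ 0)
    (hΛ : ∀ x y, inner ℂ (Λ x) (Λ y) = s * (xᴴ * y).trace) (hΛsurj : Function.Surjective Λ)
    {R : H → (Hε →L[ℂ] H)} (hR : ∀ ξ x, R ξ (Λ x) = α x ξ) (ξ η : H) :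
    (R ξ).comp (ContinuousLinearMap.adjoint (R η)) = s⁻¹ • ∑ i, ∑ j,
      α (single i j 1) * (innerSL ℂ η).smulRight ξ * α (single j i 1) := by
  ext ζ
  obtain ⟨x, hx⟩ := hΛsurj (ContinuousLinearMap.adjoint (R η) ζ)
  have hcoeff : ∀ i j, inner ℂ η (α (single j i 1) ζ) = s * x i j := by
    intro i j
    rw [← adjoint_map_single_one α i j, ContinuousLinearMap.adjoint_inner_right, ← hR,
      ← ContinuousLinearMap.adjoint_inner_right, ← hx, inner_map_single_one hΛ]
  calc R ξ (ContinuousLinearMap.adjoint (R η) ζ) = α x ξ := by rw [← hx, hR]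
    _ = ∑ i, ∑ j, x i j • α (single i j 1) ξ := by
        conv_lhs => rw [matrix_eq_sum_single x]
        simp only [map_sum, _root_.sum_apply]
        refine Finset.sum_congr rfl fun i _ => Finset.sum_congr rfl fun j _ => ?_
        rw [← _root_.smul_apply, ← map_smul, smul_single, smul_eq_mul, mul_one]
    _ = _ := by simp [hcoeff, Finset.smul_sum, smul_smul, hs]

end RankOne

end MatrixUnits

theorem stmt8_general (n : ℕ)
    {H : Type*} [NormedAddCommGroup H] [InnerProductSpace ℂ H] [CompleteSpace H]
    {Hε : Type*} [NormedAddCommGroup Hε] [InnerProductSpace ℂ Hε] [CompleteSpace Hε]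
    {A : Type*} [Ring A] [StarRing A] [Algebra ℂ A]
    (α : Matrix (Fin n) (Fin n) ℂ →⋆ₐ[ℂ] (H →L[ℂ] H))
    (β : (Matrix (Fin n) (Fin n) ℂ)ᵐᵒᵖ →⋆ₐ[ℂ] A)
    (ι : (H →L[ℂ] H) →⋆ₐ[ℂ] A)
    (hcomm : ∀ T x, Commute (ι T) (β x))
    (Λ : Matrix (Fin n) (Fin n) ℂ →ₗ[ℂ] Hε)
    (hΛ : ∀ x y, (inner ℂ (Λ x) (Λ y) : ℂ) = (n : ℂ) * (xᴴ * y).trace)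
    (hspan : Submodule.span ℂ (Set.range Λ) = ⊤)
    (R : H → (Hε →L[ℂ] H))
    (hR : ∀ ξ x, R ξ (Λ x) = α x ξ)
    (q : A)
    (hq : q = (n : ℂ)⁻¹ • ∑ i : Fin n, ∑ j : Fin n,
        ι (α (single i j (1 : ℂ))) * β (op (single j i (1 : ℂ))))
    (ξ η : H) :
    q * ι ((R ξ).comp (ContinuousLinearMap.adjoint (R η)))
        = ι ((R ξ).comp (ContinuousLinearMap.adjoint (R η))) * q ∧
      q * ι ((R ξ).comp (ContinuousLinearMap.adjoint (R η)))
        = q * ι ((innerSL ℂ η).smulRight ξ) * q := by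
  rcases n.eq_zero_or_pos with rfl | hn
  · have hq0 : q = 0 := by simp [hq]
    simp [hq0]
  have hΛsurj : Function.Surjective Λ := by
    rwa [← LinearMap.range_eq_top, ← Submodule.span_eq (LinearMap.range Λ), LinearMap.coe_range]
  have hRR := comp_adjoint_eq_sum_conj_rankOne α (Nat.cast_ne_zero.mpr hn.ne') hΛ hΛsurj hR ξ η
  set a : Fin n → Fin n → A := fun i j => ι (α (single i j 1))
  set c : Fin n → Fin n → A := fun i j => β (op (single j i 1))
  have ha : IsMatrixUnits a := isMatrixUnits_map_single (ι.comp α)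
  have hc : IsMatrixUnits c := isMatrixUnits_map_op_single β
  have hac : ∀ i j k l, Commute (a i j) (c k l) := fun _ _ _ _ => hcomm _ _
  have htc : ∀ i j, Commute (ι ((innerSL ℂ η).smulRight ξ)) (c i j) := fun _ _ => hcomm _ _
  have hιRR : ι ((R ξ).comp (ContinuousLinearMap.adjoint (R η))) = (n : ℂ)⁻¹ •
      ∑ i, ∑ j, a i j * ι ((innerSL ℂ η).smulRight ξ) * a j i := by
    simp [hRR, map_sum, a]
  have hq' : q = (n : ℂ)⁻¹ • matrixUnitPairing a c := hq
  rw [hq', hιRR]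
  simp only [smul_mul_assoc, mul_smul_comm]
  rw [matrixUnitPairing_mul_sum_conj ha hc hac htc, sum_conj_mul_matrixUnitPairing ha hc hac htc]
  exact ⟨rfl, rfl⟩

/-- With `q = (1/n) Σ_{ij} α(E_{ij}) ⊗ β(E_{ji})` (realized via the first-leg embedding `ι`
of `B(H)` and a commuting representation `β` of `M_n(ℂ)ᵒᵖ`), one has
`q (R_ξ R_η* ⊗ 1) = (R_ξ R_η* ⊗ 1) q = q (θ_{ξ,η} ⊗ 1) q`. -/
theorem stmt8 (n : ℕ)
    {H : Type*} [NormedAddCommGroup H] [InnerProductSpace ℂ H] [CompleteSpace H]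
    {Hε : Type*} [NormedAddCommGroup Hε] [InnerProductSpace ℂ Hε] [CompleteSpace Hε]
    {A : Type*} [Ring A] [StarRing A] [Algebra ℂ A] [StarModule ℂ A]
    (α : Matrix (Fin n) (Fin n) ℂ →⋆ₐ[ℂ] (H →L[ℂ] H))
    (β : (Matrix (Fin n) (Fin n) ℂ)ᵐᵒᵖ →⋆ₐ[ℂ] A)
    (ι : (H →L[ℂ] H) →⋆ₐ[ℂ] A)
    (hcomm : ∀ T x, Commute (ι T) (β x))
    (Λ : Matrix (Fin n) (Fin n) ℂ →ₗ[ℂ] Hε)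
    (hΛ : ∀ x y, (inner ℂ (Λ x) (Λ y) : ℂ) = (n : ℂ) * (xᴴ * y).trace)
    (hspan : Submodule.span ℂ (Set.range Λ) = ⊤)
    (R : H → (Hε →L[ℂ] H))
    (hR : ∀ ξ x, R ξ (Λ x) = α x ξ)
    (q : A)
    (hq : q = (n : ℂ)⁻¹ • ∑ i : Fin n, ∑ j : Fin n,
        ι (α (single i j (1 : ℂ))) * β (op (single j i (1 : ℂ))))
    (ξ η : H) :
    q * ι ((R ξ).comp (ContinuousLinearMap.adjoint (R η)))
        = ι ((R ξ).comp (ContinuousLinearMap.adjoint (R η))) * q ∧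
      q * ι ((R ξ).comp (ContinuousLinearMap.adjoint (R η)))
        = q * ι ((innerSL ℂ η).smulRight ξ) * q :=
  stmt8_general n α β ι hcomm Λ hΛ hspan R hR q hq ξ η
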